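/- Fix T ⊆ [n] with n ∉ T. The number of signed permutations (ω,ε) of [n] with ω(1) ∈ T and all right-to-left maxima unbarred is 2|T|·1·3⋯(2n−3), and the number of signed permutations in D_n with ω(1) ∉ T ∪ {n} and all right-to-left maxima unbarred is (n−|T|−1)·1·3⋯(2n−3). In either case (n ∈ T or n ∉ T), the total of the two counts is (|T|+n−1)·1·3⋯(2n−3). -/

import Mathlib

/-!
Positions and values live in `Fin n`, so the paper's `1` and `n` are `0` and `Fin.last`.

Deleting the first entry of a signed permutation of `[n+1]` and standardising the remaining
values identifies it with its first value `t`, its first sign `s` and a signed permutation of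
`[n]` (`consPerm`). The first position is a right-to-left maximum exactly when `t = n+1`, and the
other right-to-left maxima are those of the smaller permutation. Hence every first entry `(t, s)`
except `(n+1, -1)` has `G n` admissible completions, where `G n` counts the signed permutations of
`[n]` with all right-to-left maxima unbarred; in `D_{n+1}` with `t ≠ n+1` the sign `s` is forced
by the parity of the rest. Taking all `t` gives `G (n+1) = (2n+1) G n`, so `G n = 1·3⋯(2n-1)`.
-/

open Finset

namespace SignedPerm

open Equiv

variable {n : ℕ}

def IsRTLMax (ω : Perm (Fin n)) (i : Fin n) : Prop :=
  ∀ j, i < j → ω j < ω i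

instance (ω : Perm (Fin n)) : DecidablePred (IsRTLMax ω) :=
  fun i => inferInstanceAs (Decidable (∀ j, i < j → ω j < ω i))

def RTLMaxUnbarred (p : Perm (Fin n) × (Fin n → ℤˣ)) : Prop :=
  ∀ i, IsRTLMax p.1 i → p.2 i = 1

instance : DecidablePred (RTLMaxUnbarred (n := n)) :=
  fun p => inferInstanceAs (Decidable (∀ i, IsRTLMax p.1 i → p.2 i = 1))

/-- The permutation with first value `t` whose other values are in the relative order of `σ`. -/
def consPerm (t : Fin (n + 1)) (σ : Perm (Fin n)) : Perm (Fin (n + 1)) :=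
  ((finSuccEquiv n).trans (optionCongr σ)).trans (finSuccEquiv' t).symm

@[simp] lemma consPerm_zero (t : Fin (n + 1)) (σ : Perm (Fin n)) : consPerm t σ 0 = t := by
  simp [consPerm]

@[simp] lemma consPerm_succ (t : Fin (n + 1)) (σ : Perm (Fin n)) (j : Fin n) :
    consPerm t σ j.succ = t.succAbove (σ j) := by
  simp [consPerm]

lemma consPerm_injective :
    Function.Injective fun x : Fin (n + 1) × Perm (Fin n) => consPerm x.1 x.2 := by
  rintro ⟨t, σ⟩ ⟨t', σ'⟩ h
  have ht : t = t' := by simpa using congr($h 0)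
  subst ht
  refine Prod.ext rfl (Equiv.ext fun j => Fin.succAbove_right_injective (p := t) ?_)
  simpa using congr($h j.succ)

lemma isRTLMax_consPerm_zero {t : Fin (n + 1)} {σ : Perm (Fin n)} :
    IsRTLMax (consPerm t σ) 0 ↔ t = Fin.last n := by
  have hmax : (∀ k : Fin n, k.castSucc < t) ↔ t = Fin.last n := by
    refine ⟨fun h => by_contra fun ht => ?_, fun ht k => ht ▸ k.castSucc_lt_last⟩
    simpa using h (t.castPred ht)
  simpa [IsRTLMax, Fin.forall_fin_succ, Fin.succAbove_lt_iff_castSucc_lt] using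
    σ.forall_congr_right.trans hmax

lemma isRTLMax_consPerm_succ {t : Fin (n + 1)} {σ : Perm (Fin n)} {i : Fin n} :
    IsRTLMax (consPerm t σ) i.succ ↔ IsRTLMax σ i := by
  simp [IsRTLMax, Fin.forall_fin_succ]

lemma rtlMaxUnbarred_cons {t : Fin (n + 1)} {σ : Perm (Fin n)} {s : ℤˣ} {ε : Fin n → ℤˣ} :
    RTLMaxUnbarred (consPerm t σ, Fin.cons s ε) ↔
      (t = Fin.last n → s = 1) ∧ RTLMaxUnbarred (σ, ε) := by
  simp [RTLMaxUnbarred, Fin.forall_fin_succ, isRTLMax_consPerm_zero, isRTLMax_consPerm_succ]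

lemma consPerm_cons_bijective :
    Function.Bijective fun x : (Fin (n + 1) × ℤˣ) × (Perm (Fin n) × (Fin n → ℤˣ)) =>
      ((consPerm x.1.1 x.2.1, Fin.cons x.1.2 x.2.2) :
        Perm (Fin (n + 1)) × (Fin (n + 1) → ℤˣ)) := by
  refine (Fintype.bijective_iff_injective_and_card _).2 ⟨?_, ?_⟩
  · rintro ⟨⟨t, s⟩, σ, ε⟩ ⟨⟨t', s'⟩, σ', ε'⟩ h
    obtain ⟨hperm, hsign⟩ := Prod.mk.inj h
    obtain ⟨rfl, rfl⟩ := Prod.mk.inj (consPerm_injective hperm)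
    obtain ⟨rfl, rfl⟩ := Fin.cons_injective2 hsign
    rfl
  · simp [Fintype.card_perm, Nat.factorial_succ, pow_succ, mul_assoc, mul_comm, mul_left_comm]

lemma card_rtlMaxUnbarred_fst_mem (T : Finset (Fin (n + 1))) :
    #{p : Perm (Fin (n + 1)) × (Fin (n + 1) → ℤˣ) | p.1 0 ∈ T ∧ RTLMaxUnbarred p} =
      #((T ×ˢ (univ : Finset ℤˣ)).erase (Fin.last n, -1)) *
        #{q : Perm (Fin n) × (Fin n → ℤˣ) | RTLMaxUnbarred q} := by
  rw [← card_product]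
  refine (card_bijective _ consPerm_cons_bijective fun ⟨⟨t, s⟩, σ, ε⟩ => ?_).symm
  rcases Int.units_eq_one_or s with rfl | rfl <;>
    simp [rtlMaxUnbarred_cons, and_assoc, and_comm, and_left_comm]

lemma card_filter_mul_eq_one {α β G : Type*} [Group G] [Fintype G] [DecidableEq G]
    (S : Finset α) (V : Finset β) (f : β → G) :
    #{x ∈ (S ×ˢ (univ : Finset G)) ×ˢ V | x.1.2 * f x.2 = 1} = #(S ×ˢ V) := by
  refine card_nbij' (fun x => (x.1.1, x.2)) (fun y => ((y.1, (f y.2)⁻¹), y.2)) ?_ ?_ ?_ ?_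
  · rintro ⟨⟨a, g⟩, b⟩ hx
    simp_all
  · rintro ⟨a, b⟩ hy
    simp_all
  · rintro ⟨⟨a, g⟩, b⟩ hx
    have hg : g = (f b)⁻¹ := eq_inv_of_mul_eq_one_left (mem_filter.1 hx).2
    simp [hg]
  · rintro ⟨a, b⟩ -
    rfl

lemma card_even_rtlMaxUnbarred_fst_not_mem (T : Finset (Fin (n + 1))) :
    #{p : Perm (Fin (n + 1)) × (Fin (n + 1) → ℤˣ) |
        (∏ i, p.2 i) = 1 ∧ p.1 0 ∉ T ∧ p.1 0 ≠ Fin.last n ∧ RTLMaxUnbarred p} =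
      #(Tᶜ.erase (Fin.last n)) * #{q : Perm (Fin n) × (Fin n → ℤˣ) | RTLMaxUnbarred q} := by
  rw [← card_product, ← card_filter_mul_eq_one _ _ fun q => ∏ i, q.2 i]
  refine (card_bijective _ consPerm_cons_bijective fun ⟨⟨t, s⟩, σ, ε⟩ => ?_).symm
  simp +contextual [rtlMaxUnbarred_cons, Fin.prod_cons, Int.units_eq_one_or, and_assoc, and_comm,
    and_left_comm]

lemma card_erase_last_neg_one_add (T : Finset (Fin (n + 1))) :
    #((T ×ˢ (univ : Finset ℤˣ)).erase (Fin.last n, -1)) + (if Fin.last n ∈ T then 1 else 0) =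
      2 * #T := by
  by_cases h : Fin.last n ∈ T
  · rw [if_pos h, card_erase_add_one (by simpa using h)]
    simp [mul_comm]
  · rw [if_neg h, erase_eq_of_notMem (by simpa using h)]
    simp [mul_comm]

lemma card_compl_erase_last_add (T : Finset (Fin (n + 1))) :
    #(Tᶜ.erase (Fin.last n)) + #T + (if Fin.last n ∈ T then 0 else 1) = n + 1 := by
  have hcompl := card_compl_add_card T
  rw [Fintype.card_fin] at hcompl
  by_cases h : Fin.last n ∈ T
  · rwa [if_pos h, erase_eq_of_notMem (by simpa using h)]
  · have := card_erase_add_one (mem_compl.2 h)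
    rw [if_neg h]
    omega

lemma card_rtlMaxUnbarred (n : ℕ) :
    #{p : Perm (Fin n) × (Fin n → ℤˣ) | RTLMaxUnbarred p} = ∏ k ∈ range n, (2 * k + 1) := by
  induction n with
  | zero => rfl
  | succ n ih =>
    have hcount := card_rtlMaxUnbarred_fst_mem (univ : Finset (Fin (n + 1)))
    have hfirst := card_erase_last_neg_one_add (univ : Finset (Fin (n + 1)))
    simp only [mem_univ, true_and, if_true, card_univ, Fintype.card_fin] at hcount hfirst
    rw [hcount, ih, prod_range_succ, mul_comm]
    congr 1
    omega

end SignedPerm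

/-- Fix `T ⊆ [n]`.  If `n ∉ T`, the number of signed permutations `(ω,ε)` of `[n]`
with `ω(1) ∈ T` and all right-to-left maxima unbarred is `2|T|·1·3⋯(2n-3)`, and the
number of even-signed permutations (in `D_n`) with `ω(1) ∉ T ∪ {n}` and all
right-to-left maxima unbarred is `(n-|T|-1)·1·3⋯(2n-3)`.  In either case
(`n ∈ T` or `n ∉ T`) the total of the two counts is `(|T|+n-1)·1·3⋯(2n-3)`. -/
theorem card_interpolating_not_mem_T {n : ℕ} (hn : 2 ≤ n) (T : Finset (Fin n)) :
    (((⟨n - 1, by omega⟩ : Fin n) ∉ T →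
      ((Finset.univ : Finset (Equiv.Perm (Fin n) × (Fin n → ℤˣ))).filter
          (fun p => p.1 ⟨0, by omega⟩ ∈ T ∧
            ∀ i : Fin n, (∀ j : Fin n, i < j → p.1 j < p.1 i) → p.2 i = 1)).card
        = 2 * T.card * ∏ k ∈ Finset.range (n - 1), (2 * k + 1) ∧
      ((Finset.univ : Finset (Equiv.Perm (Fin n) × (Fin n → ℤˣ))).filter
          (fun p => (∏ i, p.2 i) = 1 ∧
            p.1 ⟨0, by omega⟩ ∉ T ∧ p.1 ⟨0, by omega⟩ ≠ ⟨n - 1, by omega⟩ ∧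
            ∀ i : Fin n, (∀ j : Fin n, i < j → p.1 j < p.1 i) → p.2 i = 1)).card
        = (n - T.card - 1) * ∏ k ∈ Finset.range (n - 1), (2 * k + 1))) ∧
    ((Finset.univ : Finset (Equiv.Perm (Fin n) × (Fin n → ℤˣ))).filter
        (fun p => p.1 ⟨0, by omega⟩ ∈ T ∧
          ∀ i : Fin n, (∀ j : Fin n, i < j → p.1 j < p.1 i) → p.2 i = 1)).card
      + ((Finset.univ : Finset (Equiv.Perm (Fin n) × (Fin n → ℤˣ))).filter
          (fun p => (∏ i, p.2 i) = 1 ∧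
            p.1 ⟨0, by omega⟩ ∉ T ∧ p.1 ⟨0, by omega⟩ ≠ ⟨n - 1, by omega⟩ ∧
            ∀ i : Fin n, (∀ j : Fin n, i < j → p.1 j < p.1 i) → p.2 i = 1)).card
      = (T.card + n - 1) * ∏ k ∈ Finset.range (n - 1), (2 * k + 1) := by
  obtain ⟨m, rfl⟩ : ∃ m, n = m + 1 := ⟨n - 1, by omega⟩
  have hA := SignedPerm.card_rtlMaxUnbarred_fst_mem T
  have hB := SignedPerm.card_even_rtlMaxUnbarred_fst_not_mem T
  have hfirst := SignedPerm.card_erase_last_neg_one_add T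
  have hfree := SignedPerm.card_compl_erase_last_add T
  rw [SignedPerm.card_rtlMaxUnbarred] at hA hB
  -- the goal's sets are those of `hA`, `hB` once `RTLMaxUnbarred` and `⟨0, _⟩ = 0` are unfolded
  erw [hA, hB]
  simp only [Nat.add_sub_cancel]
  refine ⟨fun hT => ?_, ?_⟩
  · replace hT : Fin.last m ∉ T := hT
    rw [if_neg hT, add_zero] at hfirst
    rw [if_neg hT] at hfree
    refine ⟨by rw [hfirst], ?_⟩
    congr 1
    omega
  · rw [← add_mul]
    congr 1
    split_ifs at hfirst hfree <;> omega
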